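/- arXiv:1904.01393 — 4 statements merged into one kernel-verified Lean document; each statement's English description precedes it below -/
import Mathlib

section
/- Let λ₁ ≤ λ₂ ≤ 1 be real numbers, a ∈ ℝ, b ≥ 0, and θ ∈ (0, ∞). Define ψ(n,m₁,m₂) = 2^{na}·(2^n + 2^{nλ₁} + 2^{nλ₂} + 2^{nλ₁}|m₁| + 2^{nλ₂}|m₂|)^{-b}. Then ∑_{ℤ³} ψ^θ < ∞ if and only if b·θ > 2 and (λ₂ - λ₁)/θ + b·λ₁ < a < (λ₁ + λ₂ - 2)/θ + b. -/
/-!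
Write `A = a θ` and `p = b θ`, so that `ψ(n, m₁, m₂) ^ θ = 2 ^ (n A) (c + B |m₁| + C |m₂|) ^ (-p)`
with `c = 2 ^ n + 2 ^ (n λ₁) + 2 ^ (n λ₂)`, `B = 2 ^ (n λ₁)`, `C = 2 ^ (n λ₂)`.
Comparing `∑ₘ (c + B |m|) ^ (-p)` with the telescoping series of `(c + B m) ^ (1 - p)` shows
that it is finite iff `p > 1`, and then of size `c ^ (1 - p) / B` when `B ≤ c`. Used twice, this
makes the sum over `(m₁, m₂)` finite iff `p > 2`, and then of size `c ^ (2 - p) / (B C)`.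
Since `c ≍ 2 ^ n` for `n ≥ 0` and `c ≍ 2 ^ (n λ₁)` for `n ≤ 0`, what is left of the sum over `n`
is a pair of geometric series, convergent iff `A + 2 - p - λ₁ - λ₂ < 0 < A + (2 - p) λ₁ - λ₁ - λ₂`.
-/

noncomputable def shearPsi (l1 l2 a b : ℝ) (n m₁ m₂ : ℤ) : ℝ :=
  (2 : ℝ) ^ ((n : ℝ) * a) *
    ((2 : ℝ) ^ (n : ℝ) + (2 : ℝ) ^ ((n : ℝ) * l1) + (2 : ℝ) ^ ((n : ℝ) * l2)
      + (2 : ℝ) ^ ((n : ℝ) * l1) * |(m₁ : ℝ)| + (2 : ℝ) ^ ((n : ℝ) * l2) * |(m₂ : ℝ)|) ^ (-b)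

open Real Filter Topology

lemma rpow_neg_tangent_le {s x y : ℝ} (hs : 0 ≤ s) (hx : 0 < x) (hy : 0 < y) :
    x ^ (-s) - s * x ^ (-s - 1) * (y - x) ≤ y ^ (-s) := by
  have hxy : 0 < y / x := div_pos hy hx
  have hratio : 1 - s * (y / x - 1) ≤ (y / x) ^ (-s) := calc
    1 - s * (y / x - 1) ≤ log (y / x) * (-s) + 1 := by
      nlinarith [log_le_sub_one_of_pos hxy]
    _ ≤ exp (log (y / x) * (-s)) := add_one_le_exp _
    _ = (y / x) ^ (-s) := (rpow_def_of_pos hxy _).symm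
  have hxs : 0 < x ^ (-s) := rpow_pos_of_pos hx _
  calc x ^ (-s) - s * x ^ (-s - 1) * (y - x) = x ^ (-s) * (1 - s * (y / x - 1)) := by
        rw [rpow_sub_one hx.ne']; field_simp
    _ ≤ x ^ (-s) * (y / x) ^ (-s) := mul_le_mul_of_nonneg_left hratio hxs.le
    _ = y ^ (-s) := by rw [div_rpow hy.le hx.le, mul_div_cancel₀ _ hxs.ne']

lemma rpow_one_sub_sub_bounds {p u d : ℝ} (hp : 1 < p) (hu : 0 < u) (hd : 0 < d) :
    (p - 1) * d * (u + d) ^ (-p) ≤ u ^ (1 - p) - (u + d) ^ (1 - p) ∧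
      u ^ (1 - p) - (u + d) ^ (1 - p) ≤ (p - 1) * d * u ^ (-p) := by
  have hs : 0 ≤ p - 1 := by linarith
  have h1 := rpow_neg_tangent_le hs (add_pos hu hd) hu
  have h2 := rpow_neg_tangent_le hs hu (add_pos hu hd)
  rw [show -(p - 1) - 1 = -p by ring, neg_sub] at h1 h2
  constructor <;> nlinarith

lemma hasSum_sub_succ_of_antitone {g : ℕ → ℝ} (hg : Antitone g)
    (hlim : Tendsto g atTop (𝓝 0)) : HasSum (fun n => g n - g (n + 1)) (g 0) := by
  refine (hasSum_iff_tendsto_nat_of_nonneg (fun n => sub_nonneg.2 (hg n.le_succ)) _).2 ?_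
  simp_rw [Finset.sum_range_sub']
  simpa using tendsto_const_nhds.sub hlim

section Comparison

variable {ι α β : Type*} {k K : ℝ}

lemma summable_iff_of_le_of_le {f g : ι → ℝ} (hk : 0 < k) (hg : 0 ≤ g)
    (hlo : ∀ i, k * g i ≤ f i) (hhi : ∀ i, f i ≤ K * g i) : Summable f ↔ Summable g :=
  ⟨fun hf => (hf.div_const k).of_nonneg_of_le hg fun i => by rw [le_div_iff₀' hk]; exact hlo i,
    fun hgs => (hgs.mul_left K).of_nonneg_of_le (fun i => (mul_nonneg hk.le (hg i)).trans (hlo i))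
      hhi⟩

variable {f : α × β → ℝ} {g : α → ℝ}

lemma summable_prod_iff_of_tsum_bounds (hk : 0 < k) (hf : 0 ≤ f) (hg : 0 ≤ g)
    (hfib : ∀ a, Summable fun b => f (a, b)) (hlo : ∀ a, k * g a ≤ ∑' b, f (a, b))
    (hhi : ∀ a, ∑' b, f (a, b) ≤ K * g a) : Summable f ↔ Summable g := by
  rw [summable_prod_of_nonneg hf, ← summable_iff_of_le_of_le hk hg hlo hhi]
  exact and_iff_right hfib

lemma tsum_prod_bounds_of_tsum_bounds (hk : 0 < k) (hf : 0 ≤ f) (hg : 0 ≤ g) (hgs : Summable g)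
    (hfib : ∀ a, Summable fun b => f (a, b)) (hlo : ∀ a, k * g a ≤ ∑' b, f (a, b))
    (hhi : ∀ a, ∑' b, f (a, b) ≤ K * g a) :
    k * ∑' a, g a ≤ ∑' x, f x ∧ ∑' x, f x ≤ K * ∑' a, g a := by
  have hfs : Summable f := (summable_prod_iff_of_tsum_bounds hk hf hg hfib hlo hhi).2 hgs
  rw [hfs.tsum_prod, ← tsum_mul_left, ← tsum_mul_left]
  exact ⟨(hgs.mul_left k).tsum_le_tsum hlo hfs.prod,
    hfs.prod.tsum_le_tsum hhi (hgs.mul_left K)⟩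

end Comparison

section LatticeSums

variable {p c B C : ℝ}

lemma summable_nat_add_mul_rpow_neg_iff (hc : 0 < c) (hB : 0 < B) :
    Summable (fun n : ℕ => (c + B * n) ^ (-p)) ↔ 1 < p := by
  have h : ∀ n : ℕ, (c + B * n) ^ (-p) = B ^ (-p) * (1 / |n + c / B| ^ p) := fun n => by
    rw [abs_of_pos (by positivity), one_div, ← rpow_neg (by positivity),
      ← mul_rpow hB.le (by positivity), mul_add, mul_div_cancel₀ _ hB.ne', add_comm]
  simp_rw [h, summable_mul_left_iff (rpow_pos_of_pos hB _).ne',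
    Real.summable_one_div_nat_add_rpow]

lemma summable_int_add_mul_abs_rpow_neg_iff (hc : 0 < c) (hB : 0 < B) :
    Summable (fun m : ℤ => (c + B * |(m : ℝ)|) ^ (-p)) ↔ 1 < p := by
  simp_rw [summable_int_iff_summable_nat_and_neg, Int.cast_neg, abs_neg, Int.cast_natCast,
    Nat.abs_cast, and_self, summable_nat_add_mul_rpow_neg_iff hc hB]

lemma tsum_nat_add_mul_rpow_neg_bounds (hp : 1 < p) (hc : 0 < c) (hB : 0 < B) :
    c ^ (1 - p) ≤ (p - 1) * B * (c ^ (-p) + ∑' n : ℕ, (c + B * (n + 1 : ℕ)) ^ (-p)) ∧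
      (p - 1) * B * ∑' n : ℕ, (c + B * (n + 1 : ℕ)) ^ (-p) ≤ c ^ (1 - p) := by
  set f : ℕ → ℝ := fun n => (c + B * n) ^ (-p) with hf
  set g : ℕ → ℝ := fun n => (c + B * n) ^ (1 - p) with hg
  have hfs : Summable f := (summable_nat_add_mul_rpow_neg_iff hc hB).2 hp
  have hterm (n : ℕ) : (p - 1) * B * f (n + 1) ≤ g n - g (n + 1) ∧
      g n - g (n + 1) ≤ (p - 1) * B * f n := by
    have := rpow_one_sub_sub_bounds hp (by positivity : 0 < c + B * n) hB
    simpa only [hf, hg, Nat.cast_succ, mul_add_one, ← add_assoc] using this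
  have htel : HasSum (fun n => g n - g (n + 1)) (c ^ (1 - p)) := by
    have hanti : Antitone g := fun m n hmn => rpow_le_rpow_of_nonpos (by positivity)
      (by gcongr) (by linarith)
    have hlim : Tendsto g atTop (𝓝 0) := by
      have := (tendsto_rpow_neg_atTop (show 0 < p - 1 by linarith)).comp
        (tendsto_atTop_add_const_left _ c (tendsto_natCast_atTop_atTop.const_mul_atTop hB))
      simpa only [Function.comp_def, neg_sub] using this
    simpa [hg] using hasSum_sub_succ_of_antitone hanti hlim
  have hsplit : ∑' n, f n = c ^ (-p) + ∑' n, f (n + 1) := by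
    rw [hfs.tsum_eq_zero_add]; simp [hf]
  refine ⟨?_, hasSum_le (fun n => (hterm n).1)
    (((summable_nat_add_iff 1).2 hfs).hasSum.mul_left _) htel⟩
  rw [← hsplit]
  exact hasSum_le (fun n => (hterm n).2) htel (hfs.hasSum.mul_left _)

lemma tsum_int_add_mul_abs_rpow_neg_bounds (hp : 1 < p) (hB : 0 < B) (hBc : B ≤ c) :
    (p - 1)⁻¹ / B * c ^ (-(p - 1)) ≤ ∑' m : ℤ, (c + B * |(m : ℝ)|) ^ (-p) ∧
      ∑' m : ℤ, (c + B * |(m : ℝ)|) ^ (-p) ≤ (p + 1) / (p - 1) / B * c ^ (-(p - 1)) := by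
  have hc : 0 < c := hB.trans_le hBc
  have hp1 : 0 < p - 1 := by linarith
  obtain ⟨hlo, hhi⟩ := tsum_nat_add_mul_rpow_neg_bounds hp hc hB
  set T := ∑' n : ℕ, (c + B * (n + 1 : ℕ)) ^ (-p)
  have hT : 0 ≤ T := tsum_nonneg fun n => by positivity
  have hint : ∑' m : ℤ, (c + B * |(m : ℝ)|) ^ (-p) = c ^ (-p) + 2 * T := by
    rw [tsum_int_eq_zero_add_two_mul_tsum_pnat (fun m => by simp)
      ((summable_int_add_mul_abs_rpow_neg_iff hc hB).2 hp)]
    simp only [Int.cast_natCast, Nat.abs_cast]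
    rw [tsum_pnat_eq_tsum_succ (f := fun n : ℕ => (c + B * n) ^ (-p))]
    simp [T, nsmul_eq_mul]
  have hcp : c ^ (-p) ≤ c ^ (1 - p) / B := by
    rw [le_div_iff₀ hB, sub_eq_neg_add, rpow_add_one hc.ne']
    exact mul_le_mul_of_nonneg_left hBc (by positivity)
  rw [hint, neg_sub]
  constructor
  · calc (p - 1)⁻¹ / B * c ^ (1 - p) ≤ (p - 1)⁻¹ / B * ((p - 1) * B * (c ^ (-p) + T)) := by
          gcongr
      _ = c ^ (-p) + T := by field_simp
      _ ≤ c ^ (-p) + 2 * T := by linarith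
  · have hT' : T ≤ c ^ (1 - p) / ((p - 1) * B) := by rw [le_div_iff₀' (by positivity)]; exact hhi
    calc c ^ (-p) + 2 * T ≤ c ^ (1 - p) / B + 2 * (c ^ (1 - p) / ((p - 1) * B)) := by gcongr
      _ = (p + 1) / (p - 1) / B * c ^ (1 - p) := by field_simp; ring

lemma summable_int_prod_add_mul_abs_rpow_neg_iff (hB : 0 < B) (hC : 0 < C) (hCc : C ≤ c) :
    Summable (fun m : ℤ × ℤ => (c + B * |(m.1 : ℝ)| + C * |(m.2 : ℝ)|) ^ (-p)) ↔ 2 < p := by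
  have hc : 0 < c := hC.trans_le hCc
  have hCc' (m : ℤ) : C ≤ c + B * |(m : ℝ)| := le_add_of_le_of_nonneg hCc (by positivity)
  by_cases hp : 1 < p
  · have hbounds (m : ℤ) := tsum_int_add_mul_abs_rpow_neg_bounds hp hC (hCc' m)
    rw [summable_prod_iff_of_tsum_bounds
      (f := fun m : ℤ × ℤ => (c + B * |(m.1 : ℝ)| + C * |(m.2 : ℝ)|) ^ (-p))
      (g := fun m : ℤ => (c + B * |(m : ℝ)|) ^ (-(p - 1)))
      (k := (p - 1)⁻¹ / C) (K := (p + 1) / (p - 1) / C) (div_pos (inv_pos.2 (sub_pos.2 hp)) hC)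
      (fun _ => by positivity) (fun _ => by positivity)
      (fun m => (summable_int_add_mul_abs_rpow_neg_iff (c := c + B * |(m : ℝ)|)
        (hC.trans_le (hCc' m)) hC).2 hp) (fun m => (hbounds m).1) (fun m => (hbounds m).2),
      summable_int_add_mul_abs_rpow_neg_iff hc hB]
    constructor <;> intro h <;> linarith
  · refine iff_of_false (fun h => hp ?_) (by linarith)
    have h0 := ((summable_prod_of_nonneg fun _ => by positivity).1 h).1 0
    simp only [Int.cast_zero, abs_zero, mul_zero, add_zero] at h0
    exact (summable_int_add_mul_abs_rpow_neg_iff hc hC).1 h0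

lemma tsum_int_prod_add_mul_abs_rpow_neg_bounds (hp : 2 < p) (hB : 0 < B) (hC : 0 < C)
    (hBc : B ≤ c) (hCc : C ≤ c) :
    ((p - 1) * (p - 2))⁻¹ / (B * C) * c ^ (2 - p) ≤
        ∑' m : ℤ × ℤ, (c + B * |(m.1 : ℝ)| + C * |(m.2 : ℝ)|) ^ (-p) ∧
      ∑' m : ℤ × ℤ, (c + B * |(m.1 : ℝ)| + C * |(m.2 : ℝ)|) ^ (-p) ≤
        (p + 1) / (p - 1) * (p / (p - 2)) / (B * C) * c ^ (2 - p) := by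
  have hc : 0 < c := hC.trans_le hCc
  have hp1 : 1 < p := by linarith
  have hCc' (m : ℤ) : C ≤ c + B * |(m : ℝ)| := le_add_of_le_of_nonneg hCc (by positivity)
  have hbounds (m : ℤ) := tsum_int_add_mul_abs_rpow_neg_bounds hp1 hC (hCc' m)
  obtain ⟨hlo, hhi⟩ := tsum_prod_bounds_of_tsum_bounds
    (f := fun m : ℤ × ℤ => (c + B * |(m.1 : ℝ)| + C * |(m.2 : ℝ)|) ^ (-p))
    (g := fun m : ℤ => (c + B * |(m : ℝ)|) ^ (-(p - 1)))
    (div_pos (inv_pos.2 (sub_pos.2 hp1)) hC) (fun _ => by positivity) (fun _ => by positivity)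
    ((summable_int_add_mul_abs_rpow_neg_iff hc hB).2 (by linarith))
    (fun m => (summable_int_add_mul_abs_rpow_neg_iff (c := c + B * |(m : ℝ)|)
      (hC.trans_le (hCc' m)) hC).2 hp1) (fun m => (hbounds m).1) (fun m => (hbounds m).2)
  obtain ⟨hglo, hghi⟩ := tsum_int_add_mul_abs_rpow_neg_bounds (p := p - 1) (by linarith) hB hBc
  rw [show p - 1 - 1 = p - 2 by ring, show -(p - 2) = 2 - p by ring] at hglo hghi
  rw [sub_add_cancel] at hghi
  have hp2 : 0 < p - 2 := by linarith
  constructor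
  · calc ((p - 1) * (p - 2))⁻¹ / (B * C) * c ^ (2 - p)
        = (p - 1)⁻¹ / C * ((p - 2)⁻¹ / B * c ^ (2 - p)) := by field_simp
      _ ≤ _ := by gcongr
      _ ≤ _ := hlo
  · calc _ ≤ (p + 1) / (p - 1) / C * ∑' m : ℤ, (c + B * |(m : ℝ)|) ^ (-(p - 1)) := hhi
      _ ≤ (p + 1) / (p - 1) / C * (p / (p - 2) / B * c ^ (2 - p)) := by gcongr
      _ = _ := by field_simp

end LatticeSums

lemma summable_nat_two_rpow_mul_iff {α : ℝ} :
    Summable (fun n : ℕ => (2 : ℝ) ^ ((n : ℝ) * α)) ↔ α < 0 := by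
  simp_rw [mul_comm _ α, rpow_mul zero_le_two, rpow_natCast]
  rw [summable_geometric_iff_norm_lt_one, norm_of_nonneg (by positivity),
    rpow_lt_one_iff_of_pos two_pos]
  norm_num

lemma rpow_bounds_of_le_of_le_three_mul {q w x : ℝ} (hq : q ≤ 0) (hw : 0 < w) (hwx : w ≤ x)
    (hxw : x ≤ 3 * w) : 3 ^ q * w ^ q ≤ x ^ q ∧ x ^ q ≤ w ^ q :=
  ⟨by rw [← mul_rpow zero_le_three hw.le]; exact rpow_le_rpow_of_nonpos (hw.trans_le hwx) hxw hq,
    rpow_le_rpow_of_nonpos hw hwx hq⟩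

noncomputable def shearScale (l1 l2 t : ℝ) : ℝ := 2 ^ t + 2 ^ (t * l1) + 2 ^ (t * l2)

/-- The size of the fibre sum `∑ m₁ m₂, ψ(t, m₁, m₂) ^ θ` when `A = a θ` and `p = b θ`. -/
noncomputable def shearFiberScale (l1 l2 A p t : ℝ) : ℝ :=
  2 ^ (t * A) * shearScale l1 l2 t ^ (2 - p) / (2 ^ (t * l1) * 2 ^ (t * l2))

section Shear

variable {l1 l2 A p t : ℝ}

lemma shearScale_bounds_of_nonneg (h1 : l1 ≤ 1) (h2 : l2 ≤ 1) (ht : 0 ≤ t) :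
    2 ^ t ≤ shearScale l1 l2 t ∧ shearScale l1 l2 t ≤ 3 * 2 ^ t := by
  have h1' : (2 : ℝ) ^ (t * l1) ≤ 2 ^ t :=
    rpow_le_rpow_of_exponent_le one_le_two (mul_le_of_le_one_right ht h1)
  have h2' : (2 : ℝ) ^ (t * l2) ≤ 2 ^ t :=
    rpow_le_rpow_of_exponent_le one_le_two (mul_le_of_le_one_right ht h2)
  constructor <;> unfold shearScale <;> linarith [rpow_pos_of_pos two_pos (t * l1),
    rpow_pos_of_pos two_pos (t * l2)]

lemma shearScale_bounds_of_nonpos (h12 : l1 ≤ l2) (h1 : l1 ≤ 1) (ht : t ≤ 0) :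
    2 ^ (t * l1) ≤ shearScale l1 l2 t ∧ shearScale l1 l2 t ≤ 3 * 2 ^ (t * l1) := by
  have h1' : (2 : ℝ) ^ t ≤ 2 ^ (t * l1) :=
    rpow_le_rpow_of_exponent_le one_le_two (by nlinarith)
  have h2' : (2 : ℝ) ^ (t * l2) ≤ 2 ^ (t * l1) :=
    rpow_le_rpow_of_exponent_le one_le_two (mul_le_mul_of_nonpos_left h12 ht)
  constructor <;> unfold shearScale <;> linarith [rpow_pos_of_pos two_pos t,
    rpow_pos_of_pos two_pos (t * l2)]

lemma shearScale_pos : 0 < shearScale l1 l2 t := by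
  unfold shearScale; positivity

lemma two_rpow_mul_l1_le_shearScale : (2 : ℝ) ^ (t * l1) ≤ shearScale l1 l2 t := by
  unfold shearScale; linarith [rpow_pos_of_pos two_pos t, rpow_pos_of_pos two_pos (t * l2)]

lemma two_rpow_mul_l2_le_shearScale : (2 : ℝ) ^ (t * l2) ≤ shearScale l1 l2 t := by
  unfold shearScale; linarith [rpow_pos_of_pos two_pos t, rpow_pos_of_pos two_pos (t * l1)]

lemma shearFiberScale_pos : 0 < shearFiberScale l1 l2 A p t := by
  unfold shearFiberScale shearScale; positivity

lemma shearFiberScale_bounds {e : ℝ} (hp : 2 ≤ p) (hlo : 2 ^ (t * e) ≤ shearScale l1 l2 t)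
    (hhi : shearScale l1 l2 t ≤ 3 * 2 ^ (t * e)) :
    3 ^ (2 - p) * 2 ^ (t * (A + (2 - p) * e - l1 - l2)) ≤ shearFiberScale l1 l2 A p t ∧
      shearFiberScale l1 l2 A p t ≤ 2 ^ (t * (A + (2 - p) * e - l1 - l2)) := by
  have hsplit : (2 : ℝ) ^ (t * (A + (2 - p) * e - l1 - l2)) =
      2 ^ (t * A) * (2 ^ (t * e)) ^ (2 - p) / (2 ^ (t * l1) * 2 ^ (t * l2)) := by
    rw [← rpow_mul zero_le_two, ← rpow_add two_pos, ← rpow_add two_pos, ← rpow_sub two_pos]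
    ring_nf
  obtain ⟨h3, h4⟩ := rpow_bounds_of_le_of_le_three_mul (by linarith : 2 - p ≤ 0)
    (by positivity) hlo hhi
  rw [hsplit, shearFiberScale]
  constructor
  · calc (3 : ℝ) ^ (2 - p) * (2 ^ (t * A) * (2 ^ (t * e)) ^ (2 - p) / (2 ^ (t * l1) * 2 ^ (t * l2)))
        = 2 ^ (t * A) * (3 ^ (2 - p) * (2 ^ (t * e)) ^ (2 - p)) /
            (2 ^ (t * l1) * 2 ^ (t * l2)) := by ring
      _ ≤ _ := by gcongr
  · gcongr

lemma summable_shearFiberScale_iff (hp : 2 ≤ p) (h12 : l1 ≤ l2) (h2 : l2 ≤ 1) :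
    Summable (fun n : ℤ => shearFiberScale l1 l2 A p n) ↔
      A + (2 - p) - l1 - l2 < 0 ∧ 0 < A + (2 - p) * l1 - l1 - l2 := by
  have h1 : l1 ≤ 1 := h12.trans h2
  rw [summable_int_iff_summable_nat_and_neg]
  simp only [Int.cast_natCast, Int.cast_neg]
  refine and_congr ?_ ?_
  · have hb (n : ℕ) := shearFiberScale_bounds (A := A) hp (e := 1)
      (by rw [mul_one]; exact (shearScale_bounds_of_nonneg h1 h2 n.cast_nonneg).1)
      (by rw [mul_one]; exact (shearScale_bounds_of_nonneg h1 h2 n.cast_nonneg).2)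
    rw [summable_iff_of_le_of_le (K := 1) (by positivity) (fun _ => by positivity)
      (fun n => (hb n).1) (fun n => (hb n).2.trans_eq (one_mul _).symm),
      summable_nat_two_rpow_mul_iff, mul_one]
  · have hb (n : ℕ) := shearFiberScale_bounds (A := A) hp
      (shearScale_bounds_of_nonpos h12 h1 (neg_nonpos.2 n.cast_nonneg)).1
      (shearScale_bounds_of_nonpos h12 h1 (neg_nonpos.2 n.cast_nonneg)).2
    simp only [neg_mul_comm] at hb
    rw [summable_iff_of_le_of_le (K := 1) (by positivity) (fun _ => by positivity)
      (fun n => (hb n).1) (fun n => (hb n).2.trans_eq (one_mul _).symm),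
      summable_nat_two_rpow_mul_iff, neg_lt_zero]

lemma tsum_shear_fiber_bounds (hp : 2 < p) :
    ((p - 1) * (p - 2))⁻¹ * shearFiberScale l1 l2 A p t ≤
        2 ^ (t * A) * ∑' m : ℤ × ℤ, (shearScale l1 l2 t + 2 ^ (t * l1) * |(m.1 : ℝ)|
          + 2 ^ (t * l2) * |(m.2 : ℝ)|) ^ (-p) ∧
      2 ^ (t * A) * ∑' m : ℤ × ℤ, (shearScale l1 l2 t + 2 ^ (t * l1) * |(m.1 : ℝ)|
          + 2 ^ (t * l2) * |(m.2 : ℝ)|) ^ (-p) ≤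
        (p + 1) / (p - 1) * (p / (p - 2)) * shearFiberScale l1 l2 A p t := by
  obtain ⟨hlo, hhi⟩ := tsum_int_prod_add_mul_abs_rpow_neg_bounds hp (by positivity)
    (by positivity) two_rpow_mul_l1_le_shearScale two_rpow_mul_l2_le_shearScale
  have h2A : (0 : ℝ) ≤ 2 ^ (t * A) := by positivity
  constructor
  · calc _ = 2 ^ (t * A) * (((p - 1) * (p - 2))⁻¹ / (2 ^ (t * l1) * 2 ^ (t * l2)) *
            shearScale l1 l2 t ^ (2 - p)) := by
          rw [shearFiberScale]; ring
      _ ≤ _ := mul_le_mul_of_nonneg_left hlo h2A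
  · calc _ ≤ 2 ^ (t * A) * ((p + 1) / (p - 1) * (p / (p - 2)) / (2 ^ (t * l1) * 2 ^ (t * l2)) *
            shearScale l1 l2 t ^ (2 - p)) := mul_le_mul_of_nonneg_left hhi h2A
      _ = _ := by rw [shearFiberScale]; ring

lemma summable_shear_lattice_iff (h12 : l1 ≤ l2) (h2 : l2 ≤ 1) :
    Summable (fun q : ℤ × ℤ × ℤ => (2 : ℝ) ^ ((q.1 : ℝ) * A) *
      (shearScale l1 l2 q.1 + 2 ^ ((q.1 : ℝ) * l1) * |(q.2.1 : ℝ)|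
        + 2 ^ ((q.1 : ℝ) * l2) * |(q.2.2 : ℝ)|) ^ (-p)) ↔
      2 < p ∧ A + (2 - p) - l1 - l2 < 0 ∧ 0 < A + (2 - p) * l1 - l1 - l2 := by
  have hf0 (q : ℤ × ℤ × ℤ) : 0 ≤ (2 : ℝ) ^ ((q.1 : ℝ) * A) *
      (shearScale l1 l2 q.1 + 2 ^ ((q.1 : ℝ) * l1) * |(q.2.1 : ℝ)|
        + 2 ^ ((q.1 : ℝ) * l2) * |(q.2.2 : ℝ)|) ^ (-p) := by
    have := shearScale_pos (l1 := l1) (l2 := l2) (t := q.1); positivity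
  have hfib (n : ℤ) : Summable (fun m : ℤ × ℤ => (2 : ℝ) ^ ((n : ℝ) * A) *
      (shearScale l1 l2 n + 2 ^ ((n : ℝ) * l1) * |(m.1 : ℝ)|
        + 2 ^ ((n : ℝ) * l2) * |(m.2 : ℝ)|) ^ (-p)) ↔ 2 < p := by
    rw [summable_mul_left_iff (rpow_pos_of_pos two_pos _).ne']
    exact summable_int_prod_add_mul_abs_rpow_neg_iff (by positivity) (by positivity)
      two_rpow_mul_l2_le_shearScale
  by_cases hp : 2 < p
  · have hp1 : 0 < p - 1 := by linarith
    have hp2 : 0 < p - 2 := by linarith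
    rw [summable_prod_iff_of_tsum_bounds (g := fun n : ℤ => shearFiberScale l1 l2 A p n)
      (k := ((p - 1) * (p - 2))⁻¹) (K := (p + 1) / (p - 1) * (p / (p - 2))) (by positivity) hf0
      (fun _ => shearFiberScale_pos.le) (fun n => (hfib n).2 hp)
      (fun n => by dsimp only; rw [tsum_mul_left]; exact (tsum_shear_fiber_bounds hp).1)
      (fun n => by dsimp only; rw [tsum_mul_left]; exact (tsum_shear_fiber_bounds hp).2),
      summable_shearFiberScale_iff hp.le h12 h2, and_iff_right hp]
  · exact iff_of_false (fun h => hp ((hfib 0).1 (((summable_prod_of_nonneg hf0).1 h).1 0)))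
      (fun h => hp h.1)

end Shear

theorem shearPsi_summable_iff_case2_general (l1 l2 a b θ : ℝ) (h12 : l1 ≤ l2) (h2 : l2 ≤ 1)
    (hθ : 0 < θ) :
    Summable (fun p : ℤ × ℤ × ℤ => (shearPsi l1 l2 a b p.1 p.2.1 p.2.2) ^ θ) ↔
      (2 < b * θ ∧ (l2 - l1) / θ + b * l1 < a ∧ a < (l1 + l2 - 2) / θ + b) := by
  have hψ (n m₁ m₂ : ℤ) : shearPsi l1 l2 a b n m₁ m₂ ^ θ = (2 : ℝ) ^ ((n : ℝ) * (a * θ)) *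
      (shearScale l1 l2 n + 2 ^ ((n : ℝ) * l1) * |(m₁ : ℝ)|
        + 2 ^ ((n : ℝ) * l2) * |(m₂ : ℝ)|) ^ (-(b * θ)) := by
    rw [shearPsi, shearScale, mul_rpow (by positivity) (by positivity), ← rpow_mul zero_le_two,
      ← rpow_mul (by positivity), mul_assoc, neg_mul]
  simp_rw [hψ]
  rw [summable_shear_lattice_iff h12 h2, and_congr_right_iff]
  intro _
  rw [and_comm, div_add' _ _ _ hθ.ne', div_lt_iff₀ hθ, div_add' _ _ _ hθ.ne', lt_div_iff₀ hθ]
  constructor <;> rintro ⟨h, h'⟩ <;> constructor <;> linarith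

theorem shearPsi_summable_iff_case2 (l1 l2 a b θ : ℝ) (h12 : l1 ≤ l2) (h2 : l2 ≤ 1)
    (hb : 0 ≤ b) (hθ : 0 < θ) :
    Summable (fun p : ℤ × ℤ × ℤ => (shearPsi l1 l2 a b p.1 p.2.1 p.2.2) ^ θ) ↔
      (2 < b * θ ∧ (l2 - l1) / θ + b * l1 < a ∧ a < (l1 + l2 - 2) / θ + b) :=
  shearPsi_summable_iff_case2_general l1 l2 a b θ h12 h2 hθ
end

section
/- Let λ₁ ≤ 1 ≤ λ₂ be real numbers, a ∈ ℝ, b ≥ 0, and θ ∈ (0, ∞). Define ψ(n,m₁,m₂) = 2^{na}·(2^n + 2^{nλ₁} + 2^{nλ₂} + 2^{nλ₁}|m₁| + 2^{nλ₂}|m₂|)^{-b}. Then ∑_{ℤ³} ψ^θ < ∞ if and only if b·θ > 2 and (λ₂ - λ₁)/θ + b·λ₁ < a < (λ₁ - λ₂)/θ + b·λ₂. -/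
/-!
Put `x = 2 ^ n` and `c = b θ`. Then `ψ ^ θ = x ^ (a θ) (A + B |m₁| + C |m₂|) ^ (-c)` with
`A = x + x ^ λ₁ + x ^ λ₂`, `B = x ^ λ₁`, `C = x ^ λ₂`. Summing one lattice variable at a time,
with the telescoping differences of `t ↦ t ^ (1 - c) / (c - 1)` in place of an integral,
the sum over `(m₁, m₂)` converges iff `c > 2`, and is then comparable to `A ^ (2 - c) / (B C)`
up to constants depending only on `c`. As `λ₁ ≤ 1 ≤ λ₂`, `A` is comparable to `x ^ λ₂` for
`n ≥ 0` and to `x ^ λ₁` for `n ≤ 0`, so the sum over `n` is squeezed between geometric series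
with ratios `2 ^ (a θ + λ₂ (1 - c) - λ₁)` for `n ≥ 0` and `2 ^ (λ₂ - a θ - λ₁ (1 - c))` for
`n ≤ 0`; these are `< 1` exactly when the two inequalities on `a` hold.
-/

open Filter Topology

lemma one_add_mul_one_sub_le_rpow_neg {s t : ℝ} (hs : 0 ≤ s) (ht : 0 < t) :
    1 + s * (1 - t) ≤ t ^ (-s) := by
  rw [Real.rpow_def_of_pos ht]
  nlinarith [Real.log_le_sub_one_of_pos ht, Real.add_one_le_exp (Real.log t * -s)]

/-- The tangent-line inequality of the convex function `t ↦ t ^ (1 - c)` at `x`. -/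
lemma rpow_one_sub_sub_rpow_one_sub_le {c x y : ℝ} (hc : 1 ≤ c) (hx : 0 < x) (hy : 0 < y) :
    x ^ (1 - c) - y ^ (1 - c) ≤ (c - 1) * (y - x) * x ^ (-c) := by
  have hbern := one_add_mul_one_sub_le_rpow_neg (sub_nonneg.2 hc) (div_pos hy hx)
  have hy' : y ^ (1 - c) = x ^ (1 - c) * (y / x) ^ (-(c - 1)) := by
    rw [neg_sub, Real.div_rpow hy.le hx.le]
    field_simp [(Real.rpow_pos_of_pos hx (1 - c)).ne']
  have hx' : x ^ (-c) = x ^ (1 - c) / x := by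
    rw [← Real.rpow_sub_one hx.ne']; ring_nf
  have hpos := Real.rpow_pos_of_pos hx (1 - c)
  rw [hy', hx']
  have hscaled : x ^ (1 - c) * (1 + (c - 1) * (1 - y / x)) ≤
      x ^ (1 - c) * (y / x) ^ (-(c - 1)) :=
    mul_le_mul_of_nonneg_left hbern hpos.le
  calc x ^ (1 - c) - x ^ (1 - c) * (y / x) ^ (-(c - 1))
      ≤ x ^ (1 - c) - x ^ (1 - c) * (1 + (c - 1) * (1 - y / x)) := by linarith
    _ = (c - 1) * (y - x) * (x ^ (1 - c) / x) := by field_simp; ring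

lemma hasSum_sub_succ_of_tendsto_zero {g : ℕ → ℝ} (hg : ∀ n, g (n + 1) ≤ g n)
    (hlim : Tendsto g atTop (𝓝 0)) : HasSum (fun n => g n - g (n + 1)) (g 0) := by
  rw [hasSum_iff_tendsto_nat_of_nonneg (fun n => sub_nonneg.2 (hg n))]
  simp_rw [Finset.sum_range_sub']
  simpa using (tendsto_const_nhds (x := g 0)).sub hlim

section OneDim

variable {A B c : ℝ}

lemma summable_nat_rpow_neg_iff (hA : 0 < A) (hB : 0 < B) :
    Summable (fun n : ℕ => (A + B * n) ^ (-c)) ↔ 1 < c := by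
  rw [← Real.summable_one_div_nat_add_rpow (A / B) c,
    ← summable_mul_left_iff (Real.rpow_pos_of_pos hB (-c)).ne'
      (f := fun n : ℕ => 1 / |n + A / B| ^ c)]
  refine summable_congr fun n => ?_
  have hpos : 0 < n + A / B := by positivity
  rw [abs_of_pos hpos, one_div, ← Real.rpow_neg hpos.le, ← Real.mul_rpow hB.le hpos.le,
    mul_add, mul_div_cancel₀ _ hB.ne', add_comm]

lemma summable_int_rpow_neg_iff (hA : 0 < A) (hB : 0 < B) :
    Summable (fun m : ℤ => (A + B * |(m : ℝ)|) ^ (-c)) ↔ 1 < c := by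
  simp [summable_int_iff_summable_nat_and_neg, summable_nat_rpow_neg_iff hA hB]

lemma tsum_nat_rpow_neg_succ_bounds (hA : 0 < A) (hB : 0 < B) (hc : 1 < c) :
    ∑' n : ℕ, (A + B * (n + 1)) ^ (-c) ≤ 1 / (c - 1) * (A ^ (1 - c) / B) ∧
      1 / (c - 1) * (A ^ (1 - c) / B) ≤ A ^ (-c) + ∑' n : ℕ, (A + B * (n + 1)) ^ (-c) := by
  set g : ℕ → ℝ := fun n => 1 / (c - 1) * ((A + B * n) ^ (1 - c) / B) with hg
  have hcB : 0 < (c - 1) * B := mul_pos (by linarith) hB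
  have hstep : ∀ n : ℕ, (A + B * (n + 1)) ^ (-c) ≤ g n - g (n + 1) ∧
      g n - g (n + 1) ≤ (A + B * n) ^ (-c) := by
    intro n
    have hx : 0 < A + B * n := by positivity
    have hy : 0 < A + B * (n + 1) := by positivity
    have hdiff : g n - g (n + 1) =
        ((A + B * n) ^ (1 - c) - (A + B * (n + 1)) ^ (1 - c)) / ((c - 1) * B) := by
      simp only [hg]; push_cast; field_simp
    have hup := rpow_one_sub_sub_rpow_one_sub_le hc.le hx hy
    have hlow := rpow_one_sub_sub_rpow_one_sub_le hc.le hy hx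
    rw [hdiff, le_div_iff₀ hcB, div_le_iff₀ hcB]
    constructor <;> nlinarith
  have htele : HasSum (fun n => g n - g (n + 1)) (g 0) := by
    refine hasSum_sub_succ_of_tendsto_zero (fun n => by
      linarith [(hstep n).1, Real.rpow_nonneg (by positivity : (0:ℝ) ≤ A + B * (n + 1)) (-c)]) ?_
    have hlin : Tendsto (fun n : ℕ => A + B * n) atTop atTop :=
      tendsto_atTop_add_const_left _ _ (tendsto_natCast_atTop_atTop.const_mul_atTop hB)
    have hpow := (tendsto_rpow_neg_atTop (by linarith : 0 < c - 1)).comp hlin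
    simpa [hg, neg_sub] using (hpow.div_const B).const_mul (1 / (c - 1))
  have hsum := (summable_nat_rpow_neg_iff hA hB).2 hc
  have hsucc : Summable (fun n : ℕ => (A + B * (n + 1)) ^ (-c)) := by
    simpa using (summable_nat_add_iff 1).2 hsum
  have hg0 : g 0 = 1 / (c - 1) * (A ^ (1 - c) / B) := by simp [hg]
  refine ⟨hg0 ▸ hasSum_le (fun n => (hstep n).1) hsucc.hasSum htele, ?_⟩
  calc 1 / (c - 1) * (A ^ (1 - c) / B) = g 0 := hg0.symm
    _ ≤ ∑' n : ℕ, (A + B * n) ^ (-c) := hasSum_le (fun n => (hstep n).2) htele hsum.hasSum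
    _ = A ^ (-c) + ∑' n : ℕ, (A + B * (n + 1)) ^ (-c) := by
      rw [hsum.tsum_eq_zero_add]; push_cast; simp

lemma tsum_int_rpow_neg_eq (hA : 0 < A) (hB : 0 < B) (hc : 1 < c) :
    ∑' m : ℤ, (A + B * |(m : ℝ)|) ^ (-c) = A ^ (-c) + 2 * ∑' n : ℕ, (A + B * (n + 1)) ^ (-c) := by
  have habs : ∀ n : ℕ, |((n + 1 : ℤ) : ℝ)| = n + 1 ∧ |((-(n + 1 : ℤ) : ℤ) : ℝ)| = n + 1 := by
    intro n
    push_cast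
    rw [abs_neg, abs_of_pos (by positivity)]
    exact ⟨rfl, rfl⟩
  have hsucc : Summable (fun n : ℕ => (A + B * (n + 1)) ^ (-c)) := by
    simpa using (summable_nat_add_iff 1).2 ((summable_nat_rpow_neg_iff hA hB).2 hc)
  rw [tsum_of_add_one_of_neg_add_one (by simpa only [habs] using hsucc)
    (by simpa only [habs] using hsucc)]
  simp only [habs, Int.cast_zero, abs_zero, mul_zero, add_zero]
  ring

lemma le_tsum_int_rpow_neg (hA : 0 < A) (hB : 0 < B) (hc : 1 < c) :
    1 / (c - 1) * (A ^ (1 - c) / B) ≤ ∑' m : ℤ, (A + B * |(m : ℝ)|) ^ (-c) := by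
  have hS : 0 ≤ ∑' n : ℕ, (A + B * (n + 1)) ^ (-c) :=
    tsum_nonneg fun n => Real.rpow_nonneg (by positivity) _
  rw [tsum_int_rpow_neg_eq hA hB hc]
  linarith [(tsum_nat_rpow_neg_succ_bounds hA hB hc).2]

lemma tsum_int_rpow_neg_le (hB : 0 < B) (hBA : B ≤ A) (hc : 1 < c) :
    ∑' m : ℤ, (A + B * |(m : ℝ)|) ^ (-c) ≤ (c + 1) / (c - 1) * (A ^ (1 - c) / B) := by
  have hA := hB.trans_le hBA
  have hAc : A ^ (-c) ≤ A ^ (1 - c) / B := by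
    rw [show -c = 1 - c - 1 by ring, Real.rpow_sub_one hA.ne']
    exact div_le_div_of_nonneg_left (Real.rpow_nonneg hA.le _) hB hBA
  have hsplit : (c + 1) / (c - 1) * (A ^ (1 - c) / B) =
      A ^ (1 - c) / B + 2 * (1 / (c - 1) * (A ^ (1 - c) / B)) := by
    field_simp [(by linarith : c - 1 ≠ 0)]; ring
  rw [tsum_int_rpow_neg_eq hA hB hc, hsplit]
  linarith [(tsum_nat_rpow_neg_succ_bounds hA hB hc).1]

end OneDim

section TwoDim

variable {A B C c : ℝ}

lemma summable_int_prod_rpow_neg_iff (hA : 0 < A) (hB : 0 < B) (hC : 0 < C) :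
    Summable (fun p : ℤ × ℤ => (A + B * |(p.1 : ℝ)| + C * |(p.2 : ℝ)|) ^ (-c)) ↔ 2 < c := by
  constructor
  · intro h
    obtain ⟨hfib, hmarg⟩ :=
      (summable_prod_of_nonneg fun p => Real.rpow_nonneg (by positivity) _).1 h
    have hc : 1 < c := (summable_int_rpow_neg_iff (A := A + B * |((0 : ℤ) : ℝ)|)
      (by positivity) hC).1 (hfib 0)
    have hlow : Summable fun m : ℤ => 1 / (c - 1) * ((A + B * |(m : ℝ)|) ^ (1 - c) / C) :=
      hmarg.of_nonneg_of_le (fun m => by positivity)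
        (fun m => le_tsum_int_rpow_neg (by positivity) hC hc)
    rw [summable_mul_left_iff (by positivity), summable_div_const_iff hC.ne', ← neg_sub c,
      summable_int_rpow_neg_iff hA hB] at hlow
    linarith
  · intro hc
    have hprod : ∀ p : ℤ × ℤ, (A + B * |(p.1 : ℝ)| + C * |(p.2 : ℝ)|) ^ (-c) ≤
        (A / 2 + B * |(p.1 : ℝ)|) ^ (-(c / 2)) * (A / 2 + C * |(p.2 : ℝ)|) ^ (-(c / 2)) := by
      intro p
      rw [show -c = -(c / 2) + -(c / 2) by ring, Real.rpow_add (by positivity)]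
      exact mul_le_mul
        (Real.rpow_le_rpow_of_nonpos (by positivity) (by nlinarith [abs_nonneg (p.2 : ℝ)])
          (by linarith))
        (Real.rpow_le_rpow_of_nonpos (by positivity) (by nlinarith [abs_nonneg (p.1 : ℝ)])
          (by linarith))
        (by positivity) (by positivity)
    exact (((summable_int_rpow_neg_iff (by positivity) hB).2 (by linarith)).mul_of_nonneg
      ((summable_int_rpow_neg_iff (by positivity) hC).2 (by linarith))
      (fun m => by positivity) (fun m => by positivity)).of_nonneg_of_le
      (fun p => by positivity) hprod

lemma tsum_int_prod_rpow_neg_eq (hA : 0 < A) (hB : 0 < B) (hC : 0 < C) (hc : 2 < c) :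
    ∑' p : ℤ × ℤ, (A + B * |(p.1 : ℝ)| + C * |(p.2 : ℝ)|) ^ (-c) =
      ∑' m : ℤ, ∑' n : ℤ, (A + B * |(m : ℝ)| + C * |(n : ℝ)|) ^ (-c) :=
  ((summable_int_prod_rpow_neg_iff hA hB hC).2 hc).tsum_prod' fun m =>
    (summable_int_rpow_neg_iff (A := A + B * |(m : ℝ)|) (by positivity) hC).2 (by linarith)

lemma summable_tsum_int_rpow_neg (hA : 0 < A) (hB : 0 < B) (hC : 0 < C) (hc : 2 < c) :
    Summable fun m : ℤ => ∑' n : ℤ, (A + B * |(m : ℝ)| + C * |(n : ℝ)|) ^ (-c) :=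
  ((summable_prod_of_nonneg fun p => Real.rpow_nonneg (by positivity) _).1
    ((summable_int_prod_rpow_neg_iff hA hB hC).2 hc)).2

lemma le_tsum_int_prod_rpow_neg (hA : 0 < A) (hB : 0 < B) (hC : 0 < C) (hc : 2 < c) :
    1 / ((c - 1) * (c - 2)) * (A ^ (2 - c) / (B * C)) ≤
      ∑' p : ℤ × ℤ, (A + B * |(p.1 : ℝ)| + C * |(p.2 : ℝ)|) ^ (-c) := by
  have hinner : ∀ m : ℤ, 1 / (c - 1) / C * (A + B * |(m : ℝ)|) ^ (-(c - 1)) ≤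
      ∑' n : ℤ, (A + B * |(m : ℝ)| + C * |(n : ℝ)|) ^ (-c) := fun m => by
    rw [neg_sub, div_mul_eq_mul_div, mul_div_assoc]
    exact le_tsum_int_rpow_neg (by positivity) hC (by linarith)
  have houter := le_tsum_int_rpow_neg hA hB (c := c - 1) (by linarith)
  rw [show c - 1 - 1 = c - 2 by ring, show 1 - (c - 1) = 2 - c by ring] at houter
  rw [tsum_int_prod_rpow_neg_eq hA hB hC hc]
  calc 1 / ((c - 1) * (c - 2)) * (A ^ (2 - c) / (B * C))
      = 1 / (c - 1) / C * (1 / (c - 2) * (A ^ (2 - c) / B)) := by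
        field_simp
    _ ≤ 1 / (c - 1) / C * ∑' m : ℤ, (A + B * |(m : ℝ)|) ^ (-(c - 1)) :=
        mul_le_mul_of_nonneg_left houter (div_nonneg (div_nonneg zero_le_one (by linarith)) hC.le)
    _ ≤ _ := by
        rw [← tsum_mul_left]
        exact (((summable_int_rpow_neg_iff hA hB).2 (by linarith)).mul_left _).tsum_le_tsum
          hinner (summable_tsum_int_rpow_neg hA hB hC hc)

lemma tsum_int_prod_rpow_neg_le (hB : 0 < B) (hC : 0 < C) (hBA : B ≤ A) (hCA : C ≤ A)
    (hc : 2 < c) :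
    ∑' p : ℤ × ℤ, (A + B * |(p.1 : ℝ)| + C * |(p.2 : ℝ)|) ^ (-c) ≤
      (c + 1) / (c - 1) * (c / (c - 2)) * (A ^ (2 - c) / (B * C)) := by
  have hA := hB.trans_le hBA
  have hK : 0 ≤ (c + 1) / (c - 1) / C :=
    div_nonneg (div_nonneg (by linarith) (by linarith)) hC.le
  have hinner : ∀ m : ℤ, ∑' n : ℤ, (A + B * |(m : ℝ)| + C * |(n : ℝ)|) ^ (-c) ≤
      (c + 1) / (c - 1) / C * (A + B * |(m : ℝ)|) ^ (-(c - 1)) := fun m => by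
    rw [neg_sub, div_mul_eq_mul_div, mul_div_assoc]
    exact tsum_int_rpow_neg_le hC (hCA.trans (by nlinarith [abs_nonneg (m : ℝ)])) (by linarith)
  have houter := tsum_int_rpow_neg_le hB hBA (c := c - 1) (by linarith)
  rw [show c - 1 + 1 = c by ring, show c - 1 - 1 = c - 2 by ring,
    show 1 - (c - 1) = 2 - c by ring] at houter
  rw [tsum_int_prod_rpow_neg_eq hA hB hC hc]
  calc ∑' m : ℤ, ∑' n : ℤ, (A + B * |(m : ℝ)| + C * |(n : ℝ)|) ^ (-c)
      ≤ ∑' m : ℤ, (c + 1) / (c - 1) / C * (A + B * |(m : ℝ)|) ^ (-(c - 1)) :=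
        (summable_tsum_int_rpow_neg hA hB hC hc).tsum_le_tsum hinner
          (((summable_int_rpow_neg_iff hA hB).2 (by linarith)).mul_left _)
    _ = (c + 1) / (c - 1) / C * ∑' m : ℤ, (A + B * |(m : ℝ)|) ^ (-(c - 1)) := tsum_mul_left
    _ ≤ (c + 1) / (c - 1) / C * (c / (c - 2) * (A ^ (2 - c) / B)) :=
        mul_le_mul_of_nonneg_left houter hK
    _ = _ := by field_simp

lemma tsum_int_prod_rpow_neg_bounds {y M : ℝ} (hB : 0 < B) (hC : 0 < C) (hy : 0 < y)
    (hBA : B ≤ A) (hCA : C ≤ A) (hyA : y ≤ A) (hAy : A ≤ M * y) (hc : 2 < c) :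
    M ^ (2 - c) / ((c - 1) * (c - 2)) * (y ^ (2 - c) / (B * C)) ≤
        ∑' p : ℤ × ℤ, (A + B * |(p.1 : ℝ)| + C * |(p.2 : ℝ)|) ^ (-c) ∧
      ∑' p : ℤ × ℤ, (A + B * |(p.1 : ℝ)| + C * |(p.2 : ℝ)|) ^ (-c) ≤
        (c + 1) / (c - 1) * (c / (c - 2)) * (y ^ (2 - c) / (B * C)) := by
  have hM : 0 < M := pos_of_mul_pos_left (hy.trans_le (hyA.trans hAy)) hy.le
  have hBC : 0 < B * C := mul_pos hB hC
  have hk : 0 ≤ 1 / ((c - 1) * (c - 2)) :=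
    div_nonneg zero_le_one (mul_nonneg (by linarith) (by linarith))
  have hK : 0 ≤ (c + 1) / (c - 1) * (c / (c - 2)) :=
    mul_nonneg (div_nonneg (by linarith) (by linarith)) (div_nonneg (by linarith) (by linarith))
  have hAy' : A ^ (2 - c) ≤ y ^ (2 - c) := Real.rpow_le_rpow_of_nonpos hy hyA (by linarith)
  have hyA' : M ^ (2 - c) * y ^ (2 - c) ≤ A ^ (2 - c) := by
    rw [← Real.mul_rpow hM.le hy.le]
    exact Real.rpow_le_rpow_of_nonpos (hy.trans_le hyA) hAy (by linarith)
  constructor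
  · calc M ^ (2 - c) / ((c - 1) * (c - 2)) * (y ^ (2 - c) / (B * C))
        = 1 / ((c - 1) * (c - 2)) * (M ^ (2 - c) * y ^ (2 - c) / (B * C)) := by ring
      _ ≤ 1 / ((c - 1) * (c - 2)) * (A ^ (2 - c) / (B * C)) :=
        mul_le_mul_of_nonneg_left (div_le_div_of_nonneg_right hyA' hBC.le) hk
      _ ≤ _ := le_tsum_int_prod_rpow_neg (hB.trans_le hBA) hB hC hc
  · exact (tsum_int_prod_rpow_neg_le hB hC hBA hCA hc).trans
      (mul_le_mul_of_nonneg_left (div_le_div_of_nonneg_right hAy' hBC.le) hK)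

end TwoDim

lemma rpow_lt_one_iff_of_one_lt {b x : ℝ} (hb : 1 < b) : b ^ x < 1 ↔ x < 0 := by
  simpa using Real.rpow_lt_rpow_left_iff hb (y := x) (z := 0)

lemma summable_nat_iff_of_geometric_bounds {f : ℕ → ℝ} {k K r : ℝ} (hk : 0 < k) (hr : 0 ≤ r)
    (hf : ∀ n, k * r ^ n ≤ f n ∧ f n ≤ K * r ^ n) : Summable f ↔ r < 1 := by
  constructor
  · intro h
    have hlow : Summable fun n => k * r ^ n :=
      h.of_nonneg_of_le (fun n => by positivity) (fun n => (hf n).1)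
    rwa [summable_mul_left_iff hk.ne', summable_geometric_iff_norm_lt_one,
      Real.norm_of_nonneg hr] at hlow
  · intro h
    exact ((summable_geometric_of_lt_one hr h).mul_left K).of_nonneg_of_le
      (fun n => (by positivity : 0 ≤ k * r ^ n).trans (hf n).1) (fun n => (hf n).2)

lemma summable_int_iff_of_geometric_bounds {f : ℤ → ℝ} {k K r s : ℝ} (hk : 0 < k) (hr : 0 ≤ r)
    (hs : 0 ≤ s) (hnat : ∀ n : ℕ, k * r ^ n ≤ f n ∧ f n ≤ K * r ^ n)
    (hneg : ∀ n : ℕ, k * s ^ n ≤ f (-n) ∧ f (-n) ≤ K * s ^ n) :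
    Summable f ↔ r < 1 ∧ s < 1 := by
  rw [summable_int_iff_summable_nat_and_neg, summable_nat_iff_of_geometric_bounds hk hr hnat,
    summable_nat_iff_of_geometric_bounds hk hs hneg]

noncomputable def shearTerm (l1 l2 α c x : ℝ) (q : ℤ × ℤ) : ℝ :=
  x ^ α * (x + x ^ l1 + x ^ l2 + x ^ l1 * |(q.1 : ℝ)| + x ^ l2 * |(q.2 : ℝ)|) ^ (-c)

lemma shearPsi_rpow_eq_shearTerm (l1 l2 a b θ : ℝ) (n m₁ m₂ : ℤ) :
    shearPsi l1 l2 a b n m₁ m₂ ^ θ = shearTerm l1 l2 (a * θ) (b * θ) (2 ^ (n : ℝ)) (m₁, m₂) := by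
  simp only [shearPsi, shearTerm, Real.rpow_mul (zero_le_two (α := ℝ))]
  rw [Real.mul_rpow (by positivity) (by positivity)]
  congr 1 <;> rw [← Real.rpow_mul (by positivity)]
  rw [neg_mul]

section Shear

variable {l1 l2 α c x : ℝ}

lemma shearTerm_nonneg (hx : 0 < x) (q : ℤ × ℤ) : 0 ≤ shearTerm l1 l2 α c x q := by
  unfold shearTerm; positivity

lemma summable_shearTerm_iff (hx : 0 < x) : Summable (shearTerm l1 l2 α c x) ↔ 2 < c := by
  unfold shearTerm
  rw [summable_mul_left_iff (Real.rpow_pos_of_pos hx α).ne']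
  exact summable_int_prod_rpow_neg_iff (by positivity) (by positivity) (by positivity)

lemma tsum_shearTerm_bounds {l : ℝ} (hx : 0 < x) (hlow : x ^ l ≤ x + x ^ l1 + x ^ l2)
    (hup : x + x ^ l1 + x ^ l2 ≤ 3 * x ^ l) (hc : 2 < c) :
    3 ^ (2 - c) / ((c - 1) * (c - 2)) * x ^ (α + l * (2 - c) - l1 - l2) ≤
        ∑' q, shearTerm l1 l2 α c x q ∧
      ∑' q, shearTerm l1 l2 α c x q ≤
        (c + 1) / (c - 1) * (c / (c - 2)) * x ^ (α + l * (2 - c) - l1 - l2) := by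
  have hB : 0 < x ^ l1 := Real.rpow_pos_of_pos hx l1
  have hC : 0 < x ^ l2 := Real.rpow_pos_of_pos hx l2
  have hxα : 0 < x ^ α := Real.rpow_pos_of_pos hx α
  have hexp : x ^ (α + l * (2 - c) - l1 - l2) =
      x ^ α * ((x ^ l) ^ (2 - c) / (x ^ l1 * x ^ l2)) := by
    rw [Real.rpow_sub hx, Real.rpow_sub hx, Real.rpow_add hx, ← Real.rpow_mul hx.le]
    ring
  obtain ⟨hlo, hhi⟩ := tsum_int_prod_rpow_neg_bounds hB hC (Real.rpow_pos_of_pos hx l)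
    (by linarith) (by linarith) hlow hup hc
  have hsum : ∑' q, shearTerm l1 l2 α c x q = x ^ α *
      ∑' q : ℤ × ℤ, (x + x ^ l1 + x ^ l2 + x ^ l1 * |(q.1 : ℝ)| + x ^ l2 * |(q.2 : ℝ)|) ^ (-c) :=
    tsum_mul_left
  rw [hsum, hexp, mul_left_comm, mul_left_comm _ (x ^ α)]
  exact ⟨mul_le_mul_of_nonneg_left hlo hxα.le, mul_le_mul_of_nonneg_left hhi hxα.le⟩

lemma tsum_shearTerm_two_rpow_natCast_bounds (hl1 : l1 ≤ 1) (hl2 : 1 ≤ l2) (hc : 2 < c) (n : ℕ) :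
    3 ^ (2 - c) / ((c - 1) * (c - 2)) * (2 ^ (α + l2 * (2 - c) - l1 - l2)) ^ n ≤
        ∑' q, shearTerm l1 l2 α c (2 ^ (n : ℝ)) q ∧
      ∑' q, shearTerm l1 l2 α c (2 ^ (n : ℝ)) q ≤
        (c + 1) / (c - 1) * (c / (c - 2)) * (2 ^ (α + l2 * (2 - c) - l1 - l2)) ^ n := by
  have hx : 1 ≤ (2 : ℝ) ^ (n : ℝ) := Real.one_le_rpow one_le_two n.cast_nonneg
  have h1 := Real.rpow_le_rpow_of_exponent_le hx hl1
  have h2 := Real.rpow_le_rpow_of_exponent_le hx hl2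
  rw [Real.rpow_one] at h1 h2
  have hbounds := tsum_shearTerm_bounds (l1 := l1) (l2 := l2) (α := α) (l := l2)
    (zero_lt_one.trans_le hx) (by linarith [Real.rpow_pos_of_pos (zero_lt_one.trans_le hx) l1])
    (by linarith) hc
  rwa [← Real.rpow_mul zero_le_two, mul_comm (n : ℝ), Real.rpow_mul_natCast zero_le_two]
    at hbounds

lemma tsum_shearTerm_two_rpow_neg_natCast_bounds (hl1 : l1 ≤ 1) (hl2 : 1 ≤ l2) (hc : 2 < c)
    (n : ℕ) :
    3 ^ (2 - c) / ((c - 1) * (c - 2)) * (2 ^ (-(α + l1 * (2 - c) - l1 - l2))) ^ n ≤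
        ∑' q, shearTerm l1 l2 α c (2 ^ (-n : ℝ)) q ∧
      ∑' q, shearTerm l1 l2 α c (2 ^ (-n : ℝ)) q ≤
        (c + 1) / (c - 1) * (c / (c - 2)) * (2 ^ (-(α + l1 * (2 - c) - l1 - l2))) ^ n := by
  have hx0 : 0 < (2 : ℝ) ^ (-n : ℝ) := by positivity
  have hx : (2 : ℝ) ^ (-n : ℝ) ≤ 1 :=
    Real.rpow_le_one_of_one_le_of_nonpos one_le_two (neg_nonpos.2 n.cast_nonneg)
  have h1 := Real.rpow_le_rpow_of_exponent_ge hx0 hx hl1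
  have h2 := Real.rpow_le_rpow_of_exponent_ge hx0 hx hl2
  rw [Real.rpow_one] at h1 h2
  have hbounds := tsum_shearTerm_bounds (l1 := l1) (l2 := l2) (α := α) (l := l1) hx0
    (by linarith [Real.rpow_pos_of_pos hx0 l2]) (by linarith) hc
  rwa [← Real.rpow_mul zero_le_two, neg_mul, ← mul_neg, mul_comm (n : ℝ),
    Real.rpow_mul_natCast zero_le_two] at hbounds

end Shear

theorem shearPsi_summable_iff_case3_general (l1 l2 a b θ : ℝ) (h1 : l1 ≤ 1) (h2 : 1 ≤ l2)
    (hθ : 0 < θ) :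
    Summable (fun p : ℤ × ℤ × ℤ => (shearPsi l1 l2 a b p.1 p.2.1 p.2.2) ^ θ) ↔
      (2 < b * θ ∧ (l2 - l1) / θ + b * l1 < a ∧ a < (l1 - l2) / θ + b * l2) := by
  have hterm : (fun p : ℤ × ℤ × ℤ => shearPsi l1 l2 a b p.1 p.2.1 p.2.2 ^ θ) =
      fun p => shearTerm l1 l2 (a * θ) (b * θ) (2 ^ (p.1 : ℝ)) p.2 :=
    funext fun p => shearPsi_rpow_eq_shearTerm l1 l2 a b θ p.1 p.2.1 p.2.2
  have hfiber : ∀ n : ℤ, Summable (shearTerm l1 l2 (a * θ) (b * θ) (2 ^ (n : ℝ))) ↔ 2 < b * θ :=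
    fun n => summable_shearTerm_iff (by positivity)
  rw [hterm, summable_prod_of_nonneg fun p => shearTerm_nonneg (by positivity) _]
  simp only [hfiber]
  by_cases hc : 2 < b * θ
  swap
  · simp [hc]
  simp only [hc, forall_const, true_and]
  have hk : 0 < 3 ^ (2 - b * θ) / ((b * θ - 1) * (b * θ - 2)) :=
    div_pos (by positivity) (mul_pos (by linarith) (by linarith))
  rw [summable_int_iff_of_geometric_bounds hk
    (r := 2 ^ (a * θ + l2 * (2 - b * θ) - l1 - l2)) (by positivity)
    (s := 2 ^ (-(a * θ + l1 * (2 - b * θ) - l1 - l2))) (by positivity)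
    (fun n => by simpa only [Int.cast_natCast] using
      tsum_shearTerm_two_rpow_natCast_bounds (α := a * θ) h1 h2 hc n)
    (fun n => by simpa only [Int.cast_neg, Int.cast_natCast] using
      tsum_shearTerm_two_rpow_neg_natCast_bounds (α := a * θ) h1 h2 hc n)]
  rw [rpow_lt_one_iff_of_one_lt one_lt_two, rpow_lt_one_iff_of_one_lt one_lt_two,
    div_add' _ _ _ hθ.ne', div_add' _ _ _ hθ.ne', div_lt_iff₀ hθ, lt_div_iff₀ hθ]
  constructor <;> rintro ⟨h, h'⟩ <;> exact ⟨by linarith, by linarith⟩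

theorem shearPsi_summable_iff_case3 (l1 l2 a b θ : ℝ) (h1 : l1 ≤ 1) (h2 : 1 ≤ l2)
    (hb : 0 ≤ b) (hθ : 0 < θ) :
    Summable (fun p : ℤ × ℤ × ℤ => (shearPsi l1 l2 a b p.1 p.2.1 p.2.2) ^ θ) ↔
      (2 < b * θ ∧ (l2 - l1) / θ + b * l1 < a ∧ a < (l1 - l2) / θ + b * l2) :=
  shearPsi_summable_iff_case3_general l1 l2 a b θ h1 h2 hθ
end

section
/- Let λ₁ ≤ λ₂ ≤ 1 be real numbers, a ∈ ℝ, b ≥ 0. Define ψ(n,m₁,m₂) = 2^{na}·(2^n + 2^{nλ₁} + 2^{nλ₂} + 2^{nλ₁}|m₁| + 2^{nλ₂}|m₂|)^{-b}. Then sup over ℤ³ of ψ is finite if and only if b·λ₁ ≤ a ≤ b. -/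
private lemma shearAux (b M c : ℝ)
    (h : ∀ k : ℕ, (3 : ℝ) ^ (-b) * ((2 : ℝ) ^ c) ^ k ≤ M) : c ≤ 0 := by
  by_contra hc
  push_neg at hc
  have h1 : (1 : ℝ) < (2 : ℝ) ^ c :=
    (Real.one_lt_rpow_iff_of_pos two_pos).2 (Or.inl ⟨one_lt_two, hc⟩)
  obtain ⟨k, hk⟩ := pow_unbounded_of_one_lt (M * (3 : ℝ) ^ b) h1
  have h3 : (0 : ℝ) < (3 : ℝ) ^ (-b) := Real.rpow_pos_of_pos (by norm_num) _
  have := h k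
  have h33 : (3 : ℝ) ^ (-b) * (3 : ℝ) ^ b = 1 := by
    rw [← Real.rpow_add (by norm_num)]; simp
  have e : (3 : ℝ) ^ (-b) * (M * (3 : ℝ) ^ b) = M := by
    rw [mul_comm M, ← mul_assoc, h33, one_mul]
  linarith [mul_lt_mul_of_pos_left hk h3]

private lemma shearLB (b t u S : ℝ) (hb : 0 ≤ b) (hS : 0 < S)
    (h3 : S ≤ 3 * (2 : ℝ) ^ u) :
    (3 : ℝ) ^ (-b) * (2 : ℝ) ^ (t - u * b) ≤ (2 : ℝ) ^ t * S ^ (-b) := by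
  have h1 : (3 * (2 : ℝ) ^ u) ^ (-b) ≤ S ^ (-b) :=
    Real.rpow_le_rpow_of_nonpos hS h3 (neg_nonpos.mpr hb)
  have h2 : (3 * (2 : ℝ) ^ u) ^ (-b) = (3 : ℝ) ^ (-b) * (2 : ℝ) ^ (u * (-b)) := by
    rw [Real.mul_rpow (by norm_num) (Real.rpow_pos_of_pos two_pos u).le,
      ← Real.rpow_mul (by norm_num)]
  calc (3 : ℝ) ^ (-b) * (2 : ℝ) ^ (t - u * b)
      = (2 : ℝ) ^ t * ((3 : ℝ) ^ (-b) * (2 : ℝ) ^ (u * (-b))) := by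
        rw [show t - u * b = t + u * (-b) by ring, Real.rpow_add two_pos]; ring
    _ ≤ (2 : ℝ) ^ t * S ^ (-b) := by
        rw [← h2]
        exact mul_le_mul_of_nonneg_left h1 (Real.rpow_pos_of_pos two_pos t).le

private lemma pow_eq (c : ℝ) (k : ℕ) : (2 : ℝ) ^ ((k : ℝ) * c) = ((2 : ℝ) ^ c) ^ k := by
  rw [← Real.rpow_natCast ((2 : ℝ) ^ c) k, ← Real.rpow_mul (by norm_num), mul_comm]

theorem shearPsi_bounded_iff_case2 (l1 l2 a b : ℝ) (h12 : l1 ≤ l2) (h2 : l2 ≤ 1)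
    (hb : 0 ≤ b) :
    (∃ M : ℝ, ∀ n m₁ m₂ : ℤ, shearPsi l1 l2 a b n m₁ m₂ ≤ M) ↔ (b * l1 ≤ a ∧ a ≤ b) := by
  have h1 : l1 ≤ 1 := h12.trans h2
  constructor
  · rintro ⟨M, hM⟩
    constructor
    · -- b * l1 ≤ a, use n = -k
      have key : ∀ k : ℕ, (3 : ℝ) ^ (-b) * ((2 : ℝ) ^ (b * l1 - a)) ^ k ≤ M := by
        intro k
        have hk0 : (0 : ℝ) ≤ (k : ℝ) := Nat.cast_nonneg k
        have hψ := hM (-(k : ℤ)) 0 0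
        simp only [shearPsi, Int.cast_neg, Int.cast_natCast, Int.cast_zero, abs_zero,
          mul_zero, add_zero] at hψ
        have hSpos : (0 : ℝ) < (2 : ℝ) ^ (-(k : ℝ)) + (2 : ℝ) ^ (-(k : ℝ) * l1)
            + (2 : ℝ) ^ (-(k : ℝ) * l2) := by positivity
        have hSle : (2 : ℝ) ^ (-(k : ℝ)) + (2 : ℝ) ^ (-(k : ℝ) * l1)
            + (2 : ℝ) ^ (-(k : ℝ) * l2) ≤ 3 * (2 : ℝ) ^ (-(k : ℝ) * l1) := by
          have e1 : (2 : ℝ) ^ (-(k : ℝ)) ≤ (2 : ℝ) ^ (-(k : ℝ) * l1) :=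
            Real.rpow_le_rpow_of_exponent_le one_le_two (by nlinarith)
          have e2 : (2 : ℝ) ^ (-(k : ℝ) * l2) ≤ (2 : ℝ) ^ (-(k : ℝ) * l1) :=
            Real.rpow_le_rpow_of_exponent_le one_le_two (by nlinarith)
          linarith
        have := shearLB b (-(k : ℝ) * a) (-(k : ℝ) * l1) _ hb hSpos hSle
        rw [show -(k : ℝ) * a - -(k : ℝ) * l1 * b = (k : ℝ) * (b * l1 - a) by ring,
          pow_eq] at this
        linarith
      linarith [sub_nonpos.mp (shearAux b M _ key)]
    · -- a ≤ b, use n = k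
      have key : ∀ k : ℕ, (3 : ℝ) ^ (-b) * ((2 : ℝ) ^ (a - b)) ^ k ≤ M := by
        intro k
        have hk0 : (0 : ℝ) ≤ (k : ℝ) := Nat.cast_nonneg k
        have hψ := hM (k : ℤ) 0 0
        simp only [shearPsi, Int.cast_natCast, Int.cast_zero, abs_zero,
          mul_zero, add_zero] at hψ
        have hSpos : (0 : ℝ) < (2 : ℝ) ^ ((k : ℝ)) + (2 : ℝ) ^ ((k : ℝ) * l1)
            + (2 : ℝ) ^ ((k : ℝ) * l2) := by positivity
        have hSle : (2 : ℝ) ^ ((k : ℝ)) + (2 : ℝ) ^ ((k : ℝ) * l1)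
            + (2 : ℝ) ^ ((k : ℝ) * l2) ≤ 3 * (2 : ℝ) ^ (k : ℝ) := by
          have e1 : (2 : ℝ) ^ ((k : ℝ) * l1) ≤ (2 : ℝ) ^ (k : ℝ) :=
            Real.rpow_le_rpow_of_exponent_le one_le_two (by nlinarith)
          have e2 : (2 : ℝ) ^ ((k : ℝ) * l2) ≤ (2 : ℝ) ^ (k : ℝ) :=
            Real.rpow_le_rpow_of_exponent_le one_le_two (by nlinarith)
          linarith
        have := shearLB b ((k : ℝ) * a) ((k : ℝ)) _ hb hSpos hSle
        rw [show (k : ℝ) * a - (k : ℝ) * b = (k : ℝ) * (a - b) by ring, pow_eq] at this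
        linarith
      linarith [sub_nonpos.mp (shearAux b M _ key)]
  · rintro ⟨ha1, ha2⟩
    refine ⟨1, fun n m₁ m₂ => ?_⟩
    unfold shearPsi
    set S := (2 : ℝ) ^ (n : ℝ) + (2 : ℝ) ^ ((n : ℝ) * l1) + (2 : ℝ) ^ ((n : ℝ) * l2)
      + (2 : ℝ) ^ ((n : ℝ) * l1) * |(m₁ : ℝ)| + (2 : ℝ) ^ ((n : ℝ) * l2) * |(m₂ : ℝ)| with hS
    have hSpos : 0 < S := by
      have := abs_nonneg ((m₁ : ℝ)); have := abs_nonneg ((m₂ : ℝ)); positivity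
    rcases le_or_gt 0 (n : ℝ) with hn | hn
    · have hx : (2 : ℝ) ^ (n : ℝ) ≤ S := by
        have h1 : 0 ≤ (2 : ℝ) ^ ((n : ℝ) * l1) * |(m₁ : ℝ)| := by positivity
        have h2 : 0 ≤ (2 : ℝ) ^ ((n : ℝ) * l2) * |(m₂ : ℝ)| := by positivity
        have h3 : 0 < (2 : ℝ) ^ ((n : ℝ) * l1) := Real.rpow_pos_of_pos two_pos _
        have h4 : 0 < (2 : ℝ) ^ ((n : ℝ) * l2) := Real.rpow_pos_of_pos two_pos _
        rw [hS]; linarith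
      have hSb : S ^ (-b) ≤ ((2 : ℝ) ^ (n : ℝ)) ^ (-b) :=
        Real.rpow_le_rpow_of_nonpos (Real.rpow_pos_of_pos two_pos _) hx
          (neg_nonpos.mpr hb)
      calc (2 : ℝ) ^ ((n : ℝ) * a) * S ^ (-b)
          ≤ (2 : ℝ) ^ ((n : ℝ) * a) * ((2 : ℝ) ^ (n : ℝ)) ^ (-b) :=
            mul_le_mul_of_nonneg_left hSb (Real.rpow_pos_of_pos two_pos _).le
        _ = (2 : ℝ) ^ ((n : ℝ) * a + (n : ℝ) * (-b)) := by
            rw [← Real.rpow_mul (by norm_num), ← Real.rpow_add two_pos]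
        _ ≤ 1 := Real.rpow_le_one_of_one_le_of_nonpos one_le_two (by nlinarith)
    · have hx : (2 : ℝ) ^ ((n : ℝ) * l1) ≤ S := by
        have h1 : 0 ≤ (2 : ℝ) ^ ((n : ℝ) * l1) * |(m₁ : ℝ)| := by positivity
        have h2 : 0 ≤ (2 : ℝ) ^ ((n : ℝ) * l2) * |(m₂ : ℝ)| := by positivity
        have h3 : 0 < (2 : ℝ) ^ ((n : ℝ)) := Real.rpow_pos_of_pos two_pos _
        have h4 : 0 < (2 : ℝ) ^ ((n : ℝ) * l2) := Real.rpow_pos_of_pos two_pos _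
        rw [hS]; linarith
      have hSb : S ^ (-b) ≤ ((2 : ℝ) ^ ((n : ℝ) * l1)) ^ (-b) :=
        Real.rpow_le_rpow_of_nonpos (Real.rpow_pos_of_pos two_pos _) hx
          (neg_nonpos.mpr hb)
      calc (2 : ℝ) ^ ((n : ℝ) * a) * S ^ (-b)
          ≤ (2 : ℝ) ^ ((n : ℝ) * a) * ((2 : ℝ) ^ ((n : ℝ) * l1)) ^ (-b) :=
            mul_le_mul_of_nonneg_left hSb (Real.rpow_pos_of_pos two_pos _).le
        _ = (2 : ℝ) ^ ((n : ℝ) * a + (n : ℝ) * l1 * (-b)) := by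
            rw [← Real.rpow_mul (by norm_num), ← Real.rpow_add two_pos]
        _ ≤ 1 := Real.rpow_le_one_of_one_le_of_nonpos one_le_two (by nlinarith)
end

section
/- Let λ₁ ≤ 1 ≤ λ₂ be real numbers, a ∈ ℝ, b ≥ 0. Define ψ(n,m₁,m₂) = 2^{na}·(2^n + 2^{nλ₁} + 2^{nλ₂} + 2^{nλ₁}|m₁| + 2^{nλ₂}|m₂|)^{-b}. Then sup over ℤ³ of ψ is finite if and only if b·λ₁ ≤ a ≤ b·λ₂. -/
/-!
Since `λ₁ ≤ 1 ≤ λ₂`, the dominant term of `2^n + 2^{nλ₁} + 2^{nλ₂}` is `2^{nc}` with `c = λ₂` for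
`n ≥ 0` and `c = λ₁` for `n ≤ 0`, and this sum lies between `2^{nc}` and `3 · 2^{nc}`. As `ψ`
decreases in `|m₁|` and `|m₂|`, this gives `3^{-b} 2^{n(a - bc)} ≤ ψ(n, 0, 0)` and
`ψ(n, m₁, m₂) ≤ 2^{n(a - bc)}`, so `ψ` is bounded exactly when `a - bλ₂ ≤ 0` and `a - bλ₁ ≥ 0`.
-/

open Real

lemma nonpos_of_forall_mul_rpow_natCast_mul_le {x C e M : ℝ} (hx : 1 < x) (hC : 0 < C)
    (h : ∀ k : ℕ, C * x ^ ((k : ℝ) * e) ≤ M) : e ≤ 0 := by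
  by_contra! he
  obtain ⟨k, hk⟩ := pow_unbounded_of_one_lt (M / C) (one_lt_rpow hx he)
  rw [div_lt_iff₀ hC, ← rpow_mul_natCast (by linarith), mul_comm e] at hk
  linarith [h k]

lemma two_rpow_mul_mul_rpow_neg (x a b c : ℝ) :
    (2 : ℝ) ^ (x * a) * ((2 : ℝ) ^ (x * c)) ^ (-b) = (2 : ℝ) ^ (x * (a - b * c)) := by
  rw [← rpow_mul zero_le_two, ← rpow_add two_pos]
  ring_nf

section shearPsi

variable {l1 l2 a b : ℝ}

lemma shearPsi_le_two_rpow (hb : 0 ≤ b) {c : ℝ} (hc : c = l1 ∨ c = l2) (n m₁ m₂ : ℤ) :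
    shearPsi l1 l2 a b n m₁ m₂ ≤ (2 : ℝ) ^ ((n : ℝ) * (a - b * c)) := by
  have hdom : (2 : ℝ) ^ ((n : ℝ) * c) ≤ (2 : ℝ) ^ (n : ℝ) + (2 : ℝ) ^ ((n : ℝ) * l1)
      + (2 : ℝ) ^ ((n : ℝ) * l2) + (2 : ℝ) ^ ((n : ℝ) * l1) * |(m₁ : ℝ)|
      + (2 : ℝ) ^ ((n : ℝ) * l2) * |(m₂ : ℝ)| := by
    have : 0 ≤ (2 : ℝ) ^ ((n : ℝ) * l1) * |(m₁ : ℝ)| := by positivity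
    have : 0 ≤ (2 : ℝ) ^ ((n : ℝ) * l2) * |(m₂ : ℝ)| := by positivity
    have : 0 ≤ (2 : ℝ) ^ (n : ℝ) := by positivity
    have : 0 ≤ (2 : ℝ) ^ ((n : ℝ) * l1) := by positivity
    have : 0 ≤ (2 : ℝ) ^ ((n : ℝ) * l2) := by positivity
    rcases hc with rfl | rfl <;> linarith
  rw [← two_rpow_mul_mul_rpow_neg]
  exact mul_le_mul_of_nonneg_left
    (rpow_le_rpow_of_nonpos (by positivity) hdom (neg_nonpos.2 hb)) (by positivity)

lemma three_rpow_neg_mul_le_shearPsi (hb : 0 ≤ b) {c : ℝ} (n : ℤ) (hn : (n : ℝ) ≤ n * c)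
    (hl1 : (n : ℝ) * l1 ≤ n * c) (hl2 : (n : ℝ) * l2 ≤ n * c) :
    (3 : ℝ) ^ (-b) * (2 : ℝ) ^ ((n : ℝ) * (a - b * c)) ≤ shearPsi l1 l2 a b n 0 0 := by
  have hdom : (2 : ℝ) ^ (n : ℝ) + (2 : ℝ) ^ ((n : ℝ) * l1) + (2 : ℝ) ^ ((n : ℝ) * l2)
      ≤ 3 * (2 : ℝ) ^ ((n : ℝ) * c) := by
    linarith [rpow_le_rpow_of_exponent_le one_le_two hn,
      rpow_le_rpow_of_exponent_le one_le_two hl1, rpow_le_rpow_of_exponent_le one_le_two hl2]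
  have hψ : shearPsi l1 l2 a b n 0 0 = (2 : ℝ) ^ ((n : ℝ) * a)
      * ((2 : ℝ) ^ (n : ℝ) + (2 : ℝ) ^ ((n : ℝ) * l1) + (2 : ℝ) ^ ((n : ℝ) * l2)) ^ (-b) := by
    simp [shearPsi]
  calc (3 : ℝ) ^ (-b) * (2 : ℝ) ^ ((n : ℝ) * (a - b * c))
      = (2 : ℝ) ^ ((n : ℝ) * a) * (3 * (2 : ℝ) ^ ((n : ℝ) * c)) ^ (-b) := by
        rw [mul_rpow zero_le_three (by positivity), ← two_rpow_mul_mul_rpow_neg]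
        ring
    _ ≤ shearPsi l1 l2 a b n 0 0 := by
        rw [hψ]
        exact mul_le_mul_of_nonneg_left
          (rpow_le_rpow_of_nonpos (by positivity) hdom (neg_nonpos.2 hb)) (by positivity)

lemma three_rpow_neg_mul_le_shearPsi_natCast (h1 : l1 ≤ 1) (h2 : 1 ≤ l2) (hb : 0 ≤ b) (k : ℕ) :
    (3 : ℝ) ^ (-b) * (2 : ℝ) ^ ((k : ℝ) * (a - b * l2)) ≤ shearPsi l1 l2 a b k 0 0 := by
  have hk1 := mul_le_mul_of_nonneg_left h1 k.cast_nonneg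
  have hk2 := mul_le_mul_of_nonneg_left h2 k.cast_nonneg
  simpa using three_rpow_neg_mul_le_shearPsi (l1 := l1) (a := a) (c := l2) hb (k : ℤ)
    (by push_cast; linarith) (by push_cast; linarith) le_rfl

lemma three_rpow_neg_mul_le_shearPsi_neg_natCast (h1 : l1 ≤ 1) (h2 : 1 ≤ l2) (hb : 0 ≤ b)
    (k : ℕ) :
    (3 : ℝ) ^ (-b) * (2 : ℝ) ^ ((k : ℝ) * (b * l1 - a)) ≤ shearPsi l1 l2 a b (-k) 0 0 := by
  have hk1 := mul_le_mul_of_nonneg_left h1 k.cast_nonneg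
  have hk2 := mul_le_mul_of_nonneg_left h2 k.cast_nonneg
  have := three_rpow_neg_mul_le_shearPsi (l2 := l2) (a := a) (c := l1) hb (-(k : ℤ))
    (by push_cast; linarith) le_rfl (by push_cast; linarith)
  rwa [Int.cast_neg, Int.cast_natCast, show -(k : ℝ) * (a - b * l1) = k * (b * l1 - a) by ring]
    at this

end shearPsi

theorem shearPsi_bounded_iff_case3 (l1 l2 a b : ℝ) (h1 : l1 ≤ 1) (h2 : 1 ≤ l2)
    (hb : 0 ≤ b) :
    (∃ M : ℝ, ∀ n m₁ m₂ : ℤ, shearPsi l1 l2 a b n m₁ m₂ ≤ M) ↔ (b * l1 ≤ a ∧ a ≤ b * l2) := by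
  constructor
  · rintro ⟨M, hM⟩
    have h3 : (0 : ℝ) < 3 ^ (-b) := rpow_pos_of_pos three_pos _
    have hneg : b * l1 - a ≤ 0 := nonpos_of_forall_mul_rpow_natCast_mul_le one_lt_two h3
      fun k => (three_rpow_neg_mul_le_shearPsi_neg_natCast h1 h2 hb k).trans (hM _ 0 0)
    have hpos : a - b * l2 ≤ 0 := nonpos_of_forall_mul_rpow_natCast_mul_le one_lt_two h3
      fun k => (three_rpow_neg_mul_le_shearPsi_natCast h1 h2 hb k).trans (hM _ 0 0)
    constructor <;> linarith
  · rintro ⟨ha1, ha2⟩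
    refine ⟨1, fun n m₁ m₂ => ?_⟩
    rcases le_total 0 (n : ℝ) with hn | hn
    · exact (shearPsi_le_two_rpow hb (c := l2) (Or.inr rfl) n m₁ m₂).trans <|
        rpow_le_one_of_one_le_of_nonpos one_le_two (mul_nonpos_of_nonneg_of_nonpos hn (by linarith))
    · exact (shearPsi_le_two_rpow hb (c := l1) (Or.inl rfl) n m₁ m₂).trans <|
        rpow_le_one_of_one_le_of_nonpos one_le_two (mul_nonpos_of_nonpos_of_nonneg hn (by linarith))
end
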